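/- Let D = {v₁,…,v_k} ⊆ 𝔽₂ⁿ, let I = {K₁,…,K_m} be a partition of {1,…,n} such that each block K_j satisfies 𝒫_D(K_j). Fix v = v₁, and define the matrix A = (a_{ij}) with a_{ij} = 1 if d_{K_j}(v₁, v_i) = 0 and a_{ij} = −1 if d_{K_j}(v₁, v_i) = |K_j|. Then p ∈ 𝔽₂ⁿ is an ε-cover-template of D if and only if the vector N = (d_{K₁}(p,v₁),…,d_{K_m}(p,v₁)) satisfies the linear inequalities (A N)_i ≤ ε − d_H(v₁, v_i) for all i ∈ {1,…,k}. -/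

import Mathlib

/-!
Split `d_H(p, v_i)` along the partition. On a block where `v₁` and `v_i` agree,
`d_K(p, v_i) = d_K(p, v₁)`; on a block where they differ everywhere,
`d_K(p, v_i) = |K| - d_K(p, v₁) = d_K(v₁, v_i) - d_K(p, v₁)`. In both cases
`d_K(p, v_i) = a_{iK} d_K(p, v₁) + d_K(v₁, v_i)`, and summing over the blocks gives
`d_H(p, v_i) = (A N)_i + d_H(v₁, v_i)`, so the two systems of inequalities coincide.
-/

/-- Hamming distance restricted to a set `K` of coordinates. -/
def dK {n : ℕ} (K : Finset (Fin n)) (u v : Fin n → Bool) : ℕ :=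
  (K.filter fun i => u i ≠ v i).card

section dK

variable {n : ℕ} {K : Finset (Fin n)} {p u w : Fin n → Bool}

lemma dK_eq_zero_iff : dK K u w = 0 ↔ ∀ l ∈ K, u l = w l := by
  simp [dK]

lemma dK_eq_card_iff : dK K u w = K.card ↔ ∀ l ∈ K, u l ≠ w l :=
  Finset.card_filter_eq_iff

lemma dK_congr_right (h : ∀ l ∈ K, u l = w l) : dK K p u = dK K p w := by
  unfold dK
  congr 1
  exact Finset.filter_congr fun l hl => by rw [h l hl]

lemma dK_add_dK_of_forall_ne (h : ∀ l ∈ K, u l ≠ w l) :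
    dK K p u + dK K p w = K.card := by
  have hcompl : (K.filter fun l => p l ≠ w l) = K.filter fun l => ¬ p l ≠ u l :=
    Finset.filter_congr fun l hl => by
      have hne := h l hl
      revert hne
      cases p l <;> cases u l <;> cases w l <;> simp
  rw [dK, dK, hcompl, Finset.card_filter_add_card_filter_not]

lemma dK_eq_mul_add_of_sign {a : ℤ} (hP : dK K u w = 0 ∨ dK K u w = K.card)
    (ha : (dK K u w = 0 → a = 1) ∧ (dK K u w = K.card → a = -1)) :
    (dK K p w : ℤ) = a * dK K p u + dK K u w := by
  rcases hP with hagree | hdiffer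
  · rw [ha.1 hagree, hagree, ← dK_congr_right (dK_eq_zero_iff.1 hagree)]
    ring
  · have hsum := dK_add_dK_of_forall_ne (p := p) (dK_eq_card_iff.1 hdiffer)
    rw [ha.2 hdiffer, hdiffer]
    omega

end dK

lemma hammingDist_eq_sum_dK {n : ℕ} {ι : Type*} [Fintype ι] (K : ι → Finset (Fin n))
    (hdisj : ∀ j j', j ≠ j' → Disjoint (K j) (K j'))
    (hcover : ∀ i : Fin n, ∃ j, i ∈ K j) (u w : Fin n → Bool) :
    hammingDist u w = ∑ j, dK (K j) u w := by
  classical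
  have huniv : (Finset.univ : Finset (Fin n)) = Finset.univ.biUnion K := by
    ext i
    simpa using hcover i
  rw [hammingDist, huniv, Finset.filter_biUnion, Finset.card_biUnion]
  · rfl
  · exact fun j _ j' _ hjj' =>
      (hdisj j j' hjj').mono (Finset.filter_subset _ _) (Finset.filter_subset _ _)

theorem stmt_9_general (n k m : ℕ) (hk : 0 < k) (v : Fin k → (Fin n → Bool))
    (K : Fin m → Finset (Fin n))
    (hdisj : ∀ j j' : Fin m, j ≠ j' → Disjoint (K j) (K j'))
    (hcover : ∀ i : Fin n, ∃ j, i ∈ K j)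
    (hP : ∀ j : Fin m, ∀ i i' : Fin k,
        dK (K j) (v i) (v i') = 0 ∨ dK (K j) (v i) (v i') = (K j).card)
    (A : Fin k → Fin m → ℤ)
    (hA : ∀ i j, (dK (K j) (v ⟨0, hk⟩) (v i) = 0 → A i j = 1) ∧
        (dK (K j) (v ⟨0, hk⟩) (v i) = (K j).card → A i j = -1))
    (ε : ℕ) (p : Fin n → Bool) :
    (∀ i : Fin k, hammingDist p (v i) ≤ ε) ↔
      (∀ i : Fin k,
        (∑ j : Fin m, A i j * (dK (K j) p (v ⟨0, hk⟩) : ℤ)) ≤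
          (ε : ℤ) - (hammingDist (v ⟨0, hk⟩) (v i) : ℤ)) := by
  have hsplit : ∀ i, (hammingDist p (v i) : ℤ) =
      ∑ j, A i j * (dK (K j) p (v ⟨0, hk⟩) : ℤ) + hammingDist (v ⟨0, hk⟩) (v i) := by
    intro i
    simp only [hammingDist_eq_sum_dK K hdisj hcover, Nat.cast_sum, ← Finset.sum_add_distrib]
    exact Finset.sum_congr rfl fun j _ => dK_eq_mul_add_of_sign (hP j _ i) (hA i j)
  refine forall_congr' fun i => ?_
  rw [← Int.ofNat_le, hsplit i]
  constructor <;> intro h <;> linarith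

/-- With `D = {v₁,…,v_k}` and a partition `I = {K₁,…,K_m}` of the
coordinates into nonempty blocks each satisfying `𝒫_D`, and with the matrix
`A` defined by `a_{ij} = 1` if `d_{K_j}(v₁,v_i) = 0` and `a_{ij} = −1` if
`d_{K_j}(v₁,v_i) = |K_j|`, a point `p` is an ε-cover-template of `D` iff
`(A N)_i ≤ ε − d_H(v₁,v_i)` for all `i`, where `N_j = d_{K_j}(p,v₁)`. -/
theorem stmt_9 (n k m : ℕ) (hk : 0 < k) (v : Fin k → (Fin n → Bool))
    (K : Fin m → Finset (Fin n))
    (hne : ∀ j, (K j).Nonempty)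
    (hdisj : ∀ j j' : Fin m, j ≠ j' → Disjoint (K j) (K j'))
    (hcover : ∀ i : Fin n, ∃ j, i ∈ K j)
    (hP : ∀ j : Fin m, ∀ i i' : Fin k,
        dK (K j) (v i) (v i') = 0 ∨ dK (K j) (v i) (v i') = (K j).card)
    (A : Fin k → Fin m → ℤ)
    (hA : ∀ i j, (dK (K j) (v ⟨0, hk⟩) (v i) = 0 → A i j = 1) ∧
        (dK (K j) (v ⟨0, hk⟩) (v i) = (K j).card → A i j = -1))
    (ε : ℕ) (p : Fin n → Bool) :
    (∀ i : Fin k, hammingDist p (v i) ≤ ε) ↔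
      (∀ i : Fin k,
        (∑ j : Fin m, A i j * (dK (K j) p (v ⟨0, hk⟩) : ℤ)) ≤
          (ε : ℤ) - (hammingDist (v ⟨0, hk⟩) (v i) : ℤ)) :=
  stmt_9_general n k m hk v K hdisj hcover hP A hA ε p
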